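/- arXiv:1701.00721 — 4 statements merged into one kernel-verified Lean document; each statement's English description precedes it below -/
import Mathlib

section
/- Let (x_n) be a sequence of nonnegative reals with x_n ≥ 2^(n²) for all n ≥ 1, and suppose (x_n) is strictly increasing. Define p : ℝ≥0 → ℝ≥0 by p(t) = 1 for t < x₁ and p(t) = x_n^(1/n) for t ∈ [x_n, x_{n+1}). Then p is asymptotically subpower. -/
open scoped NNReal

def AsymptoticallySubpower (p : ℝ≥0 → ℝ≥0) : Prop :=
  ∀ α : ℝ, 0 < α → ∃ t₀ : ℝ≥0, 0 < t₀ ∧ ∀ t : ℝ≥0, t₀ < t → p t < t ^ α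

theorem step_function_asymptoticallySubpower (x : ℕ → ℝ≥0)
    (hx : ∀ n : ℕ, 1 ≤ n → (2 : ℝ≥0) ^ (n ^ 2) ≤ x n)
    (hmono : StrictMono x)
    (p : ℝ≥0 → ℝ≥0)
    (hp1 : ∀ t : ℝ≥0, t < x 1 → p t = 1)
    (hp2 : ∀ n : ℕ, 1 ≤ n → ∀ t : ℝ≥0, x n ≤ t → t < x (n + 1) →
      p t = (x n) ^ ((1 : ℝ) / n)) :
    AsymptoticallySubpower p := by
  intro α hα
  obtain ⟨N, hN1, hNα⟩ : ∃ N : ℕ, 1 ≤ N ∧ 1 / (N : ℝ) < α := by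
    refine ⟨⌈1 / α⌉₊ + 1, Nat.le_add_left 1 _, ?_⟩
    have hN0 : (0 : ℝ) < (⌈1 / α⌉₊ + 1 : ℕ) := by positivity
    rw [div_lt_iff₀ hN0]
    have h1 : 1 / α < (⌈1 / α⌉₊ + 1 : ℕ) := by
      push_cast
      exact (Nat.le_ceil _).trans_lt (by linarith)
    have h2 := mul_lt_mul_of_pos_left h1 hα
    rw [mul_one_div, div_self hα.ne'] at h2
    linarith [h2, mul_comm α ((⌈1 / α⌉₊ + 1 : ℕ) : ℝ)]
  refine ⟨x N, ?_, ?_⟩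
  · exact lt_of_lt_of_le (by positivity) (hx N hN1)
  intro t ht
  -- t > 1
  have ht1 : (1 : ℝ≥0) < t := by
    have h2 : (2 : ℝ≥0) ≤ x N := by
      calc (2 : ℝ≥0) = 2 ^ 1 := (pow_one 2).symm
      _ ≤ 2 ^ (N ^ 2) := pow_le_pow_right₀ one_le_two (by nlinarith)
      _ ≤ x N := hx N hN1
    exact lt_of_lt_of_le one_lt_two (h2.trans ht.le)
  -- existence of k with t < x (k+1)
  have hex : ∃ k : ℕ, t < x (k + 1) := by
    obtain ⟨n, hn⟩ := pow_unbounded_of_one_lt t (one_lt_two : (1 : ℝ≥0) < 2)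
    refine ⟨n, hn.trans_le ?_⟩
    calc (2 : ℝ≥0) ^ n ≤ 2 ^ ((n + 1) ^ 2) :=
          pow_le_pow_right₀ one_le_two (by nlinarith)
    _ ≤ x (n + 1) := hx (n + 1) (Nat.le_add_left 1 n)
  classical
  set m := Nat.find hex with hm
  have hmt : t < x (m + 1) := Nat.find_spec hex
  have hNm : N ≤ m := by
    by_contra h
    push_neg at h
    have : x N ≤ x m ⊔ x N := le_sup_right
    have hxm : x m < x N ∨ x m = x N ∨ True := by tauto
    -- m < N means m ≤ N - 1, i.e. m + 1 ≤ N, so x (m+1) ≤ x N < t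
    have : x (m + 1) ≤ x N := hmono.monotone h
    exact absurd (hmt.trans_le this) (not_lt.mpr ht.le)
  have hm1 : 1 ≤ m := hN1.trans hNm
  have hxm : x m ≤ t := by
    by_contra h
    push_neg at h
    have hlt : m - 1 < m := Nat.pred_lt (Nat.one_le_iff_ne_zero.mp hm1)
    have hmin := Nat.find_min hex hlt
    have heq : m - 1 + 1 = m := Nat.succ_pred_eq_of_pos hm1
    rw [heq] at hmin
    exact hmin h
  rw [hp2 m hm1 t hxm hmt]
  have h1 : x m ^ ((1 : ℝ) / m) ≤ t ^ ((1 : ℝ) / m) :=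
    NNReal.rpow_le_rpow hxm (by positivity)
  have h2 : t ^ ((1 : ℝ) / m) < t ^ α := by
    apply NNReal.rpow_lt_rpow_of_exponent_lt ht1
    calc (1 : ℝ) / m ≤ 1 / N := by
          apply one_div_le_one_div_of_le
          · exact_mod_cast Nat.lt_of_lt_of_le Nat.zero_lt_one hN1
          · exact_mod_cast hNm
    _ < α := hNα
  exact h1.trans_lt h2
end

section
/- Let (X, d) be a metric space with basepoint x₀, and write |x| = d(x, x₀). Let E₁, E₂ ⊆ X and suppose there exist r₀, α > 0 such that max{d(x, E₁), d(x, E₂)} ≥ |x|^α for all x ∈ X with |x| ≥ r₀. Set F_i = E_i \ B(x₀, r₀ + r₀^α) (the set of points of E_i at distance ≥ r₀ + r₀^α from x₀). Then the function f(x) = d(x, F₁) + d(x, F₂) satisfies f(x) ≥ |x|^α for all x ∈ X. -/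
open Metric

theorem distance_sum_lower_bound {X : Type*} [MetricSpace X] (x₀ : X)
    (E₁ E₂ : Set X) (r₀ α : ℝ) (hr₀ : 0 < r₀) (hα : 0 < α)
    (h : ∀ x : X, r₀ ≤ dist x x₀ →
      max (infDist x E₁) (infDist x E₂) ≥ (dist x x₀) ^ α)
    (F₁ F₂ : Set X)
    (hF₁ : F₁ = {a ∈ E₁ | r₀ + r₀ ^ α ≤ dist a x₀})
    (hF₂ : F₂ = {a ∈ E₂ | r₀ + r₀ ^ α ≤ dist a x₀})
    (hne₁ : F₁.Nonempty) (hne₂ : F₂.Nonempty) :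
    ∀ x : X, infDist x F₁ + infDist x F₂ ≥ (dist x x₀) ^ α := by
  intro x
  rcases le_or_gt r₀ (dist x x₀) with hx | hx
  · -- far case: use hypothesis and F_i ⊆ E_i
    have hmax := h x hx
    have hsub₁ : F₁ ⊆ E₁ := by rw [hF₁]; exact fun a ha => ha.1
    have hsub₂ : F₂ ⊆ E₂ := by rw [hF₂]; exact fun a ha => ha.1
    rcases max_cases (infDist x E₁) (infDist x E₂) with ⟨heq, _⟩ | ⟨heq, _⟩
    · have h1 : infDist x E₁ ≤ infDist x F₁ :=
        infDist_le_infDist_of_subset hsub₁ hne₁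
      have := infDist_nonneg (s := F₂) (x := x)
      linarith [heq ▸ hmax]
    · have h2 : infDist x E₂ ≤ infDist x F₂ :=
        infDist_le_infDist_of_subset hsub₂ hne₂
      have := infDist_nonneg (s := F₁) (x := x)
      linarith [heq ▸ hmax]
  · -- near case: every point of F₁ is far
    have hbound : r₀ + r₀ ^ α - dist x x₀ ≤ infDist x F₁ := by
      refine le_of_not_gt fun hlt => ?_
      obtain ⟨y, hy, hdy⟩ := (infDist_lt_iff hne₁).1 hlt
      rw [hF₁] at hy
      have h2 := hy.2
      have htri : dist y x₀ ≤ dist x y + dist x x₀ := by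
        rw [dist_comm x y]; exact dist_triangle y x x₀
      linarith
    have hpow : dist x x₀ ^ α ≤ r₀ ^ α :=
      Real.rpow_le_rpow dist_nonneg hx.le hα.le
    have := infDist_nonneg (s := F₂) (x := x)
    have : dist x x₀ ^ α ≤ infDist x F₁ := by linarith
    linarith [infDist_nonneg (s := F₂) (x := x)]
end

section
/- Let (X, d) be a metric space with basepoint x₀ and |x| = d(x, x₀). Let f : X → ℝ satisfy f(x) ≥ max(|x|^α, c) for some α, c > 0 and all x ∈ X, and let g : X → ℝ satisfy |g(y) − g(x)| ≤ 3·d(x,y)/f(x) for all x, y. Then for every asymptotically subpower function p : ℝ≥0 → ℝ≥0 and every ε > 0, there exists r₀ > 0 such that for all x with |x| > r₀ and all y with d(x, y) < p(|x|), we have |g(y) − g(x)| < ε. -/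
open Metric
open scoped NNReal

theorem higson_subpower_of_lipschitz_estimate {X : Type*} [MetricSpace X] (x₀ : X)
    (f : X → ℝ) (α c : ℝ) (hα : 0 < α) (hc : 0 < c)
    (hf : ∀ x : X, f x ≥ max ((dist x x₀) ^ α) c)
    (g : X → ℝ)
    (hg : ∀ x y : X, |g y - g x| ≤ 3 * dist x y / f x) :
    ∀ p : ℝ≥0 → ℝ≥0, AsymptoticallySubpower p → ∀ ε : ℝ, 0 < ε →
      ∃ r₀ : ℝ, 0 < r₀ ∧ ∀ x y : X, r₀ < dist x x₀ →
        dist x y < (p (Real.toNNReal (dist x x₀)) : ℝ) → |g y - g x| < ε := by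
  intro p hp ε hε
  obtain ⟨t₀, ht₀, hsub⟩ := hp (α / 2) (by linarith)
  have h3ε : (0:ℝ) < 3 / ε := by positivity
  refine ⟨max (t₀ : ℝ) ((3 / ε) ^ (2 / α)) + 1, by positivity, ?_⟩
  intro x y hx hd
  set t : ℝ := dist x x₀ with ht
  have hmax1 := le_max_left (t₀ : ℝ) ((3 / ε) ^ (2 / α))
  have hmax2 := le_max_right (t₀ : ℝ) ((3 / ε) ^ (2 / α))
  have htpos : (0:ℝ) < t := by
    have h0 : (0:ℝ) ≤ (t₀ : ℝ) := t₀.coe_nonneg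
    linarith
  have ht₀t : t₀ < Real.toNNReal t := by
    have h1 : (t₀ : ℝ) < t := by linarith
    rwa [← Real.toNNReal_coe (r := t₀), Real.toNNReal_lt_toNNReal_iff htpos]
  have hpt := hsub _ ht₀t
  have hcoe : ((Real.toNNReal t : ℝ≥0) : ℝ) = t := Real.coe_toNNReal t htpos.le
  have hpt' : (p (Real.toNNReal t) : ℝ) < t ^ (α / 2) := by
    have := (NNReal.coe_lt_coe).2 hpt
    rwa [NNReal.coe_rpow, hcoe] at this
  have hdlt : dist x y < t ^ (α / 2) := lt_trans hd hpt'
  have htα : (0:ℝ) < t ^ α := Real.rpow_pos_of_pos htpos α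
  have htα2 : (0:ℝ) < t ^ (α / 2) := Real.rpow_pos_of_pos htpos _
  have hfx : t ^ α ≤ f x := le_trans (le_max_left _ _) (hf x)
  have hfxpos : (0:ℝ) < f x := lt_of_lt_of_le htα hfx
  have step1 : |g y - g x| ≤ 3 * dist x y / (t ^ α) := by
    calc |g y - g x| ≤ 3 * dist x y / f x := hg x y
      _ ≤ 3 * dist x y / (t ^ α) :=
        div_le_div_of_nonneg_left (by positivity) htα hfx
  have hsplit : t ^ α = t ^ (α / 2) * t ^ (α / 2) := by
    rw [← Real.rpow_add htpos]; ring_nf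
  have step2 : 3 * dist x y / (t ^ α) < 3 / t ^ (α / 2) := by
    rw [hsplit]
    rw [div_lt_div_iff₀ (by positivity) (by positivity)]
    nlinarith
  have hfinal : 3 / t ^ (α / 2) < ε := by
    have hlt : (3 / ε) ^ (2 / α) < t := by linarith
    have hmono : ((3 / ε) ^ (2 / α)) ^ (α / 2) < t ^ (α / 2) :=
      Real.rpow_lt_rpow (by positivity) hlt (by linarith)
    rw [← Real.rpow_mul h3ε.le] at hmono
    have h1 : 2 / α * (α / 2) = 1 := by field_simp
    rw [h1, Real.rpow_one] at hmono
    rw [div_lt_iff₀ htα2]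
    rw [div_lt_iff₀ hε] at hmono
    linarith [mul_lt_mul_of_pos_left hmono hε]
  linarith [lt_of_le_of_lt step1 step2]
end

section
/- Let i ≥ 2 be an integer, let Y_i = {(t, t^(1/i)) : t ≥ 2} ⊆ ℝ² with the max-metric, and let W = {(y₁, y₂) : y₁ ≥ 2, y₁^(1/(i+1)) < y₂ < y₁^(1/(i−1))}. For any point y = (y₁, y₂) with y₁ ≥ 8^(2i(i+1)) and y₁^(1/(i+1)) ≤ y₂ ≤ y₁^(1/i), if d(y, ℝ²\W) is attained towards the lower boundary curve y₂ = y₁^(1/(i+1)), then max{d(y, Y_i), d(y, ℝ²\W)} ≥ (1/4)·(y₁^(1/i) − y₁^(1/(i+1))). -/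
open Metric

private lemma rpow_subadd (x y p : ℝ) (hx : 0 ≤ x) (hy : 0 ≤ y) (hp : 0 ≤ p) (hp1 : p ≤ 1) :
    (x + y) ^ p ≤ x ^ p + y ^ p := by
  lift x to NNReal using hx
  lift y to NNReal using hy
  have := NNReal.rpow_add_le_add_rpow x y hp hp1
  have h2 : ((x + y) ^ p : NNReal) ≤ ((x ^ p + y ^ p : NNReal)) := this
  calc ((x : ℝ) + y) ^ p = ((((x + y) ^ p : NNReal)) : ℝ) := by push_cast; ring_nf
    _ ≤ (((x ^ p + y ^ p : NNReal)) : ℝ) := by exact_mod_cast h2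
    _ = (x : ℝ) ^ p + (y : ℝ) ^ p := by push_cast; ring_nf

private lemma rpow_ge_of_pow_le (c x : ℝ) (n : ℕ) (hn : 0 < n) (hc : 0 ≤ c)
    (h : c ^ n ≤ x) : c ≤ x ^ ((1 : ℝ) / n) := by
  have hx : (0:ℝ) ≤ x := le_trans (pow_nonneg hc n) h
  have : (c ^ n : ℝ) ^ ((1:ℝ)/n) ≤ x ^ ((1:ℝ)/n) :=
    Real.rpow_le_rpow (pow_nonneg hc n) h (by positivity)
  calc c = (c ^ n : ℝ) ^ ((1:ℝ)/n) := by
        rw [← Real.rpow_natCast c n, ← Real.rpow_mul hc]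
        rw [mul_one_div, div_self (by exact_mod_cast hn.ne'), Real.rpow_one]
    _ ≤ x ^ ((1:ℝ)/n) := this

theorem max_dist_ge_quarter_gap (i : ℕ) (hi : 2 ≤ i)
    (Yi W L : Set (ℝ × ℝ))
    (hYi : Yi = {p : ℝ × ℝ | ∃ t : ℝ, 2 ≤ t ∧ p = (t, t ^ ((1 : ℝ) / i))})
    (hW : W = {p : ℝ × ℝ | 2 ≤ p.1 ∧
      p.1 ^ ((1 : ℝ) / (i + 1)) < p.2 ∧ p.2 < p.1 ^ ((1 : ℝ) / (i - 1 : ℕ))})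
    (hL : L = {p : ℝ × ℝ | ∃ t : ℝ, 2 ≤ t ∧ p = (t, t ^ ((1 : ℝ) / (i + 1)))}) :
    ∀ y : ℝ × ℝ, (8 : ℝ) ^ (2 * i * (i + 1)) ≤ y.1 →
      y.1 ^ ((1 : ℝ) / (i + 1)) ≤ y.2 → y.2 ≤ y.1 ^ ((1 : ℝ) / i) →
      infDist y Wᶜ = infDist y L →
      max (infDist y Yi) (infDist y Wᶜ) ≥
        (1 / 4 : ℝ) * (y.1 ^ ((1 : ℝ) / i) - y.1 ^ ((1 : ℝ) / (i + 1))) := by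
  intro y hy1 hy2lo hy2hi hWL
  have hipos : 0 < i := by omega
  have hy1pos : (0 : ℝ) < y.1 := lt_of_lt_of_le (by positivity) hy1
  set g : ℝ := y.1 ^ ((1 : ℝ) / i) - y.1 ^ ((1 : ℝ) / (i + 1)) with hgdef
  -- g ≥ 4 : show y.1^(1/i) ≥ 2 * y.1^(1/(i+1)) and y.1^(1/(i+1)) ≥ 4
  have hA4 : (4 : ℝ) ≤ y.1 ^ ((1 : ℝ) / (i + 1)) := by
    have h1 : ((4:ℝ)) ^ (i+1) ≤ y.1 := by
      refine le_trans ?_ hy1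
      calc ((4:ℝ)) ^ (i+1) ≤ (8:ℝ) ^ (i+1) := by
            exact pow_le_pow_left₀ (by norm_num) (by norm_num) _
        _ ≤ (8:ℝ) ^ (2*i*(i+1)) := by
            apply pow_le_pow_right₀ (by norm_num); nlinarith
    have := rpow_ge_of_pow_le 4 y.1 (i+1) (by omega) (by norm_num) h1
    rwa [Nat.cast_add, Nat.cast_one] at this
  have hdouble : 2 * y.1 ^ ((1 : ℝ) / (i + 1)) ≤ y.1 ^ ((1 : ℝ) / i) := by
    -- y.1 ^ (1/i) = y.1 ^ (1/(i(i+1))) * y.1 ^ (1/(i+1)) and y.1^(1/(i(i+1))) ≥ 2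
    have hsplit : y.1 ^ ((1 : ℝ) / i) =
        y.1 ^ ((1 : ℝ) / (i * (i+1))) * y.1 ^ ((1 : ℝ) / (i + 1)) := by
      rw [← Real.rpow_add hy1pos]
      congr 1
      have h1 : (i : ℝ) ≠ 0 := by exact_mod_cast hipos.ne'
      have h2 : (i : ℝ) + 1 ≠ 0 := by positivity
      field_simp
      ring
    have h2le : (2 : ℝ) ≤ y.1 ^ ((1 : ℝ) / (i * (i+1))) := by
      have h1 : ((2:ℝ)) ^ (i*(i+1)) ≤ y.1 := by
        refine le_trans ?_ hy1
        calc ((2:ℝ)) ^ (i*(i+1)) ≤ (8:ℝ) ^ (i*(i+1)) := by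
              exact pow_le_pow_left₀ (by norm_num) (by norm_num) _
          _ ≤ (8:ℝ) ^ (2*i*(i+1)) := by
              apply pow_le_pow_right₀ (by norm_num); nlinarith
      have := rpow_ge_of_pow_le 2 y.1 (i*(i+1)) (by positivity) (by norm_num) h1
      rwa [Nat.cast_mul, Nat.cast_add, Nat.cast_one] at this
    rw [hsplit]
    have hpos : (0:ℝ) ≤ y.1 ^ ((1 : ℝ) / (i + 1)) := Real.rpow_nonneg hy1pos.le _
    nlinarith
  have hg4 : (4 : ℝ) ≤ g := by
    have : y.1 ^ ((1 : ℝ) / (i + 1)) ≤ g := by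
      simp only [hgdef]; linarith
    exact le_trans hA4 this
  have hgpos : (0 : ℝ) < g := by linarith
  -- main argument by contradiction
  by_contra hcon
  push_neg at hcon
  rw [max_lt_iff] at hcon
  obtain ⟨hdYi, hdW⟩ := hcon
  rw [hWL] at hdW
  have hYine : Yi.Nonempty := by
    rw [hYi]; exact ⟨(2, (2:ℝ) ^ ((1:ℝ)/i)), 2, le_refl _, rfl⟩
  have hLne : L.Nonempty := by
    rw [hL]; exact ⟨(2, (2:ℝ) ^ ((1:ℝ)/(i+1))), 2, le_refl _, rfl⟩
  obtain ⟨a, haY, hady⟩ := (infDist_lt_iff hYine).mp (by linarith : infDist y Yi < g/4)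
  obtain ⟨b, hbL, hbdy⟩ := (infDist_lt_iff hLne).mp (by linarith : infDist y L < g/4)
  rw [hYi] at haY; obtain ⟨s, hs2, hseq⟩ := haY
  rw [hL] at hbL; obtain ⟨u, hu2, hueq⟩ := hbL
  subst hseq hueq
  simp only [Prod.dist_eq, max_lt_iff, Real.dist_eq, abs_sub_lt_iff] at hady hbdy
  obtain ⟨⟨hs1a, hs1b⟩, hs2a, hs2b⟩ := hady
  obtain ⟨⟨hu1a, hu1b⟩, hu2a, hu2b⟩ := hbdy
  -- key bounds via subadditivity
  have hp1i : (0:ℝ) ≤ (1:ℝ)/i := by positivity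
  have hp1i1 : ((1:ℝ)/i : ℝ) ≤ 1 := by
    rw [div_le_one (by exact_mod_cast hipos)]; exact_mod_cast hipos
  have hp2 : (0:ℝ) ≤ (1:ℝ)/((i:ℝ)+1) := by positivity
  have hp2b : ((1:ℝ)/((i:ℝ)+1)) ≤ 1 := by
    rw [div_le_one (by positivity)]
    have : (1:ℝ) ≤ (i:ℝ) := by exact_mod_cast hipos
    linarith
  have hg4small : (g/4 : ℝ) ^ ((1:ℝ)/i) ≤ g/4 := by
    calc (g/4 : ℝ) ^ ((1:ℝ)/i) ≤ (g/4 : ℝ) ^ (1:ℝ) :=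
          Real.rpow_le_rpow_of_exponent_le (by linarith) hp1i1
      _ = g/4 := Real.rpow_one _
  have hg4small' : (g/4 : ℝ) ^ ((1:ℝ)/((i:ℝ)+1)) ≤ g/4 := by
    calc (g/4 : ℝ) ^ ((1:ℝ)/((i:ℝ)+1)) ≤ (g/4 : ℝ) ^ (1:ℝ) :=
          Real.rpow_le_rpow_of_exponent_le (by linarith) hp2b
      _ = g/4 := Real.rpow_one _
  -- y.1 ^ (1/i) ≤ s^(1/i) + g/4
  have hlow : y.1 ^ ((1:ℝ)/i) ≤ s ^ ((1:ℝ)/i) + g/4 := by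
    have h1 : y.1 ≤ s + g/4 := by linarith
    calc y.1 ^ ((1:ℝ)/i) ≤ (s + g/4) ^ ((1:ℝ)/i) :=
          Real.rpow_le_rpow hy1pos.le h1 hp1i
      _ ≤ s ^ ((1:ℝ)/i) + (g/4) ^ ((1:ℝ)/i) :=
          rpow_subadd s (g/4) _ (by linarith) (by linarith) hp1i hp1i1
      _ ≤ s ^ ((1:ℝ)/i) + g/4 := by linarith
  -- u^(1/(i+1)) ≤ y.1^(1/(i+1)) + g/4
  have hhigh : u ^ ((1:ℝ)/((i:ℝ)+1)) ≤ y.1 ^ ((1:ℝ)/((i:ℝ)+1)) + g/4 := by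
    have h1 : u ≤ y.1 + g/4 := by linarith
    calc u ^ ((1:ℝ)/((i:ℝ)+1)) ≤ (y.1 + g/4) ^ ((1:ℝ)/((i:ℝ)+1)) :=
          Real.rpow_le_rpow (by linarith) h1 hp2
      _ ≤ y.1 ^ ((1:ℝ)/((i:ℝ)+1)) + (g/4) ^ ((1:ℝ)/((i:ℝ)+1)) :=
          rpow_subadd y.1 (g/4) _ hy1pos.le (by linarith) hp2 hp2b
      _ ≤ y.1 ^ ((1:ℝ)/((i:ℝ)+1)) + g/4 := by linarith
  -- contradiction
  simp only [hgdef] at *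
  linarith
end
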